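/- Let G be a finite simple graph in which every vertex has positive degree, and suppose the marked set M can be partitioned into disjoint pairs of adjacent vertices of equal degree: there is a set P of pairs such that each {i,j} ∈ P satisfies i adjacent to j and deg(i) = deg(j), the pairs are pairwise disjoint, and M equals the union of the pairs. Then the state φ defined by φ(e) = −(deg(i)−1)·a if e is one of the two darts between the vertices i,j of some pair in P, and φ(e) = a on all other darts, is fixed by one step of the search algorithm: (S∘C∘Q)φ = φ. -/

import Mathlib

namespace GraphWalk

variable {V : Type*}

/-- The flip-flop shift operator `S` on the darts of a simple graph:
`(Sψ)(e) = ψ(e.symm)`. -/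
noncomputable def shift (G : SimpleGraph V) (ψ : G.Dart → ℂ) : G.Dart → ℂ :=
  fun e => ψ e.symm

/-- The Grover coin `C`:
`(Cψ)(e) = (2/deg(e.fst)) Σ_{e' : e'.fst = e.fst} ψ(e') − ψ(e)`. -/
noncomputable def coin [Fintype V] [DecidableEq V] (G : SimpleGraph V)
    [DecidableRel G.Adj] (ψ : G.Dart → ℂ) : G.Dart → ℂ :=
  fun e => (2 / (G.degree e.fst : ℂ)) *
      (∑ e' ∈ Finset.univ.filter (fun e' : G.Dart => e'.fst = e.fst), ψ e') - ψ e

/-- The query `Q`, flipping the sign of all amplitudes at marked vertices. -/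
noncomputable def query [DecidableEq V] (G : SimpleGraph V) (M : Finset V)
    (ψ : G.Dart → ℂ) : G.Dart → ℂ :=
  fun e => if e.fst ∈ M then -ψ e else ψ e

/-- One step of the search algorithm, `U' = S ∘ C ∘ Q`. -/
noncomputable def step [Fintype V] [DecidableEq V] (G : SimpleGraph V)
    [DecidableRel G.Adj] (M : Finset V) (ψ : G.Dart → ℂ) : G.Dart → ℂ :=
  shift G (coin G (query G M ψ))

/-- One step of the quantum walk without query, `U = S ∘ C`. -/
noncomputable def walk [Fintype V] [DecidableEq V] (G : SimpleGraph V)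
    [DecidableRel G.Adj] (ψ : G.Dart → ℂ) : G.Dart → ℂ :=
  shift G (coin G ψ)

end GraphWalk

/-!
A state `ψ` is fixed by `S ∘ C ∘ Q` as soon as it is invariant under dart reversal, sums to
zero over the darts leaving each marked vertex (there `Q` and `C` both act as `-1`), and is
constant on the darts leaving each unmarked vertex (there `Q` and `C` both act as the identity).
The paired state has all three properties: a marked vertex `v` has exactly one pair dart
leaving it, carrying `-(deg v - 1) a` against `deg v - 1` darts carrying `a`, and the two
vertices of a pair have the same degree.
-/

namespace GraphWalk

open Finset

variable {V : Type*} {G : SimpleGraph V}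

section Coin

variable [Fintype V] [DecidableEq V] [DecidableRel G.Adj]

theorem coin_apply_of_sum_fiber_eq_zero {ψ : G.Dart → ℂ} {e : G.Dart}
    (h : ∑ e' ∈ univ.filter (fun e' : G.Dart => e'.fst = e.fst), ψ e' = 0) :
    coin G ψ e = -ψ e := by
  simp [coin, h]

theorem coin_apply_of_forall_fiber_eq {ψ : G.Dart → ℂ} {e : G.Dart} {a : ℂ}
    (h : ∀ e' : G.Dart, e'.fst = e.fst → ψ e' = a) : coin G ψ e = a := by
  have hdeg : (G.degree e.fst : ℂ) ≠ 0 :=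
    Nat.cast_ne_zero.2 ((G.degree_pos_iff_exists_adj _).2 ⟨_, e.adj⟩).ne'
  rw [coin, sum_congr rfl fun e' he' => h e' (mem_filter.1 he').2, sum_const,
    G.dart_fst_fiber_card_eq_degree, nsmul_eq_mul, h e rfl]
  field_simp
  ring

variable {M : Finset V} {ψ : G.Dart → ℂ} {e : G.Dart}

theorem coin_query_apply_of_mem (hv : e.fst ∈ M)
    (h : ∑ e' ∈ univ.filter (fun e' : G.Dart => e'.fst = e.fst), ψ e' = 0) :
    coin G (query G M ψ) e = ψ e := by
  have hquery : ∀ e' ∈ univ.filter (fun e' : G.Dart => e'.fst = e.fst),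
      query G M ψ e' = -ψ e' := fun e' he' => by
    simp [query, (mem_filter.1 he').2, hv]
  rw [coin_apply_of_sum_fiber_eq_zero (by rw [sum_congr rfl hquery, sum_neg_distrib, h, neg_zero])]
  simp [query, hv]

theorem coin_query_apply_of_notMem {a : ℂ} (hv : e.fst ∉ M)
    (h : ∀ e' : G.Dart, e'.fst = e.fst → ψ e' = a) : coin G (query G M ψ) e = a :=
  coin_apply_of_forall_fiber_eq fun e' he' => by simp [query, he', hv, h e' he']

theorem step_eq_self (hsymm : ∀ e, ψ e.symm = ψ e)
    (hmarked : ∀ e : G.Dart, e.fst ∈ M →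
      ∑ e' ∈ univ.filter (fun e' : G.Dart => e'.fst = e.fst), ψ e' = 0)
    (hunmarked : ∀ e e' : G.Dart, e.fst ∉ M → e'.fst = e.fst → ψ e' = ψ e) :
    step G M ψ = ψ := by
  funext e
  change coin G (query G M ψ) e.symm = ψ e
  rw [← hsymm e]
  by_cases hv : e.symm.fst ∈ M
  · exact coin_query_apply_of_mem hv (hmarked _ hv)
  · exact coin_query_apply_of_notMem hv fun e' he' => hunmarked _ _ hv he'

end Coin

section Pairs

variable (P : Finset (V × V))

def IsPairDart (e : G.Dart) : Prop := e.toProd ∈ P ∨ e.toProd.swap ∈ P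

instance [DecidableEq V] (e : G.Dart) : Decidable (IsPairDart P e) :=
  inferInstanceAs (Decidable (_ ∨ _))

variable (G) in
def pairedState [Fintype V] [DecidableEq V] [DecidableRel G.Adj] (a : ℂ) (e : G.Dart) : ℂ :=
  if IsPairDart P e then -((G.degree e.fst : ℂ) - 1) * a else a

variable {P}

theorem isPairDart_symm {e : G.Dart} : IsPairDart P e.symm ↔ IsPairDart P e := by
  simp [IsPairDart, or_comm]

theorem pairedState_symm [Fintype V] [DecidableEq V] [DecidableRel G.Adj]
    (hdeg : ∀ p ∈ P, G.degree p.1 = G.degree p.2) (a : ℂ)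
    (e : G.Dart) : pairedState G P a e.symm = pairedState G P a e := by
  by_cases he : IsPairDart P e
  · have : G.degree e.symm.fst = G.degree e.fst := by
      rcases he with h | h
      · exact (hdeg _ h).symm
      · exact hdeg _ h
    simp [pairedState, isPairDart_symm, he, this]
  · simp [pairedState, isPairDart_symm, he]

theorem fst_mem_of_isPairDart [DecidableEq V] {e : G.Dart} (he : IsPairDart P e) :
    e.fst ∈ P.biUnion fun p => {p.1, p.2} := by
  simp only [mem_biUnion, mem_insert, mem_singleton]
  rcases he with h | h
  · exact ⟨_, h, Or.inl rfl⟩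
  · exact ⟨_, h, Or.inr rfl⟩

theorem exists_isPairDart [DecidableEq V] (hadj : ∀ p ∈ P, G.Adj p.1 p.2) {v : V}
    (hv : v ∈ P.biUnion fun p => {p.1, p.2}) : ∃ e : G.Dart, e.fst = v ∧ IsPairDart P e := by
  simp only [mem_biUnion, mem_insert, mem_singleton] at hv
  obtain ⟨p, hp, rfl | rfl⟩ := hv
  · exact ⟨⟨p, hadj p hp⟩, rfl, Or.inl hp⟩
  · exact ⟨⟨p.swap, (hadj p hp).symm⟩, rfl, Or.inr hp⟩

theorem eq_of_shared_vertex [DecidableEq V]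
    (hdisj : ∀ p ∈ P, ∀ q ∈ P, p ≠ q → ({p.1, p.2} : Finset V) ∩ {q.1, q.2} = ∅)
    {p q : V × V} (hp : p ∈ P) (hq : q ∈ P) {v : V} (hvp : v ∈ ({p.1, p.2} : Finset V))
    (hvq : v ∈ ({q.1, q.2} : Finset V)) : p = q := by
  by_contra hpq
  exact disjoint_left.1 (disjoint_iff_inter_eq_empty.2 (hdisj p hp q hq hpq)) hvp hvq

theorem IsPairDart.exists_mem {e : G.Dart} (he : IsPairDart P e) :
    ∃ p ∈ P, e.toProd = p ∨ e.toProd = p.swap := by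
  rcases he with h | h
  · exact ⟨_, h, Or.inl rfl⟩
  · exact ⟨_, h, Or.inr e.toProd.swap_swap.symm⟩

theorem IsPairDart.eq_of_fst_eq [DecidableEq V]
    (hdisj : ∀ p ∈ P, ∀ q ∈ P, p ≠ q → ({p.1, p.2} : Finset V) ∩ {q.1, q.2} = ∅)
    {e e' : G.Dart} (he : IsPairDart P e) (he' : IsPairDart P e') (h : e.fst = e'.fst) :
    e = e' := by
  obtain ⟨p, hp, hep⟩ := he.exists_mem
  obtain ⟨q, hq, heq⟩ := he'.exists_mem
  have hpq : p = q := eq_of_shared_vertex hdisj hp hq (v := e.fst)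
    (by rcases hep with hp' | hp' <;> simp [hp'])
    (by rw [h]; rcases heq with hq' | hq' <;> simp [hq'])
  subst hpq
  have hne := e.adj.ne
  have hne' := e'.adj.ne
  ext <;> grind

variable [Fintype V] [DecidableEq V] [DecidableRel G.Adj]

theorem sum_fiber_pairedState (hadj : ∀ p ∈ P, G.Adj p.1 p.2)
    (hdisj : ∀ p ∈ P, ∀ q ∈ P, p ≠ q → ({p.1, p.2} : Finset V) ∩ {q.1, q.2} = ∅)
    (a : ℂ) {v : V} (hv : v ∈ P.biUnion fun p => {p.1, p.2}) :
    ∑ e ∈ univ.filter (fun e : G.Dart => e.fst = v), pairedState G P a e = 0 := by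
  obtain ⟨d, hdv, hd⟩ := exists_isPairDart hadj hv
  have hd_mem : d ∈ univ.filter (fun e : G.Dart => e.fst = v) := by simp [hdv]
  have hpos : 0 < G.degree v := (G.degree_pos_iff_exists_adj v).2 ⟨d.snd, hdv ▸ d.adj⟩
  have hrest : ∀ e ∈ (univ.filter (fun e : G.Dart => e.fst = v)).erase d,
      pairedState G P a e = a := fun e he => by
    obtain ⟨hne, he_fiber⟩ := mem_erase.1 he
    have hfst : e.fst = d.fst := (mem_filter.1 he_fiber).2.trans hdv.symm
    exact if_neg fun h => hne (h.eq_of_fst_eq hdisj hd hfst)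
  rw [← add_sum_erase _ _ hd_mem, sum_congr rfl hrest, sum_const, card_erase_of_mem hd_mem,
    G.dart_fst_fiber_card_eq_degree, pairedState, if_pos hd, hdv, nsmul_eq_mul,
    Nat.cast_sub hpos, Nat.cast_one]
  ring

theorem pairedState_of_fst_notMem {e : G.Dart} (he : e.fst ∉ P.biUnion fun p => {p.1, p.2})
    (a : ℂ) : pairedState G P a e = a :=
  if_neg (mt fst_mem_of_isPairDart he)

end Pairs

end GraphWalk

open GraphWalk

theorem paired_marked_stationary_general {V : Type*} [Fintype V] [DecidableEq V]
    (G : SimpleGraph V) [DecidableRel G.Adj]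
    (P : Finset (V × V))
    (hadj : ∀ p ∈ P, G.Adj p.1 p.2 ∧ G.degree p.1 = G.degree p.2)
    (hdisj : ∀ p ∈ P, ∀ q ∈ P, p ≠ q → ({p.1, p.2} : Finset V) ∩ {q.1, q.2} = ∅)
    (M : Finset V) (hM : M = P.biUnion fun p => {p.1, p.2}) (a : ℂ) :
    GraphWalk.step G M
      (fun e => if e.toProd ∈ P ∨ e.toProd.swap ∈ P
        then -((G.degree e.fst : ℂ) - 1) * a else a)
    = fun e => if e.toProd ∈ P ∨ e.toProd.swap ∈ P
        then -((G.degree e.fst : ℂ) - 1) * a else a := by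
  subst hM
  change step G _ (pairedState G P a) = pairedState G P a
  exact step_eq_self (pairedState_symm (fun p hp => (hadj p hp).2) a)
    (fun _ he => sum_fiber_pairedState (fun p hp => (hadj p hp).1) hdisj a he)
    (fun _ _ he he' =>
      (pairedState_of_fst_notMem (he' ▸ he) a).trans (pairedState_of_fst_notMem he a).symm)

/-- Suppose the marked set `M` of a finite simple graph (every vertex of positive
degree) is partitioned into pairwise disjoint pairs `P` of adjacent vertices of equal
degree. Then the state equal to `-(deg(i)-1)·a` on the two darts between the vertices
of each pair and to `a` on every other dart is fixed by one step of the search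
algorithm `S ∘ C ∘ Q`. -/
theorem paired_marked_stationary {V : Type*} [Fintype V] [DecidableEq V]
    (G : SimpleGraph V) [DecidableRel G.Adj] (hdeg : ∀ v : V, 0 < G.degree v)
    (P : Finset (V × V))
    (hadj : ∀ p ∈ P, G.Adj p.1 p.2 ∧ G.degree p.1 = G.degree p.2)
    (hdisj : ∀ p ∈ P, ∀ q ∈ P, p ≠ q → ({p.1, p.2} : Finset V) ∩ {q.1, q.2} = ∅)
    (M : Finset V) (hM : M = P.biUnion fun p => {p.1, p.2}) (a : ℂ) :
    GraphWalk.step G M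
      (fun e => if e.toProd ∈ P ∨ e.toProd.swap ∈ P
        then -((G.degree e.fst : ℂ) - 1) * a else a)
    = fun e => if e.toProd ∈ P ∨ e.toProd.swap ∈ P
        then -((G.degree e.fst : ℂ) - 1) * a else a :=
  paired_marked_stationary_general G P hadj hdisj M hM a
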